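/- arXiv:2605.03094 — 8 statements merged into one kernel-verified Lean document; each statement's English description precedes it below -/
import Mathlib

section
/- Let R be a ring, q a central unit of R, and u, v elements of R satisfying v*u = q*u*v. Then for all natural numbers n, (u+v)^n = sum over k from 0 to n of [n choose k]_q * u^(n-k) * v^k, where [n choose k]_q is the Gaussian binomial coefficient in q. -/
/-- Gaussian (q-)binomial coefficient as an element of a ring, defined by the
q-Pascal recurrence `[n+1, k]_q = [n, k-1]_q + q^k * [n, k]_q`. -/
def gaussBinom {R : Type*} [Ring R] (q : R) : ℕ → ℕ → R
  | _, 0 => 1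
  | 0, _ + 1 => 0
  | n + 1, k + 1 => gaussBinom q n k + q ^ (k + 1) * gaussBinom q n (k + 1)

lemma gaussBinom_zero_right {R : Type*} [Ring R] (q : R) (n : ℕ) :
    gaussBinom q n 0 = 1 := by
  cases n <;> rfl

lemma gaussBinom_eq_zero {R : Type*} [Ring R] (q : R) :
    ∀ n k : ℕ, n < k → gaussBinom q n k = 0
  | 0, _ + 1, _ => rfl
  | n + 1, k + 1, h => by
    rw [gaussBinom, gaussBinom_eq_zero q n k (by omega),
      gaussBinom_eq_zero q n (k + 1) (by omega), mul_zero, add_zero]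

lemma gaussBinom_comm {R : Type*} [Ring R] (q : R) (hqc : ∀ r : R, q * r = r * q) :
    ∀ (n k : ℕ) (r : R), gaussBinom q n k * r = r * gaussBinom q n k
  | n, 0, r => by rw [gaussBinom_zero_right, one_mul, mul_one]
  | 0, k + 1, r => by rw [gaussBinom, zero_mul, mul_zero]
  | n + 1, k + 1, r => by
    have hc : Commute q r := hqc r
    have hpow : q ^ (k + 1) * r = r * q ^ (k + 1) := hc.pow_left (k + 1)
    rw [gaussBinom, add_mul, mul_add, gaussBinom_comm q hqc n k r, mul_assoc,
      gaussBinom_comm q hqc n (k + 1) r, ← mul_assoc, hpow, mul_assoc]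

lemma vu_pow {R : Type*} [Ring R] (q u v : R) (hqc : ∀ r : R, q * r = r * q)
    (h : v * u = q * (u * v)) :
    ∀ k : ℕ, v ^ k * u = q ^ k * (u * v ^ k)
  | 0 => by simp
  | k + 1 => by
    calc v ^ (k + 1) * u = v ^ k * (v * u) := by rw [pow_succ, mul_assoc]
      _ = v ^ k * q * (u * v) := by rw [h, mul_assoc]
      _ = q * (v ^ k * u * v) := by rw [← hqc (v ^ k), mul_assoc, mul_assoc]
      _ = q * (q ^ k * (u * v ^ k) * v) := by rw [vu_pow q u v hqc h k]
      _ = q ^ (k + 1) * (u * v ^ (k + 1)) := by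
          simp only [pow_succ, mul_assoc]
          rw [← mul_assoc, ← mul_assoc, hqc (q ^ k)]
          simp only [mul_assoc]

theorem qbinomial_theorem {R : Type*} [Ring R] (q u v : R)
    (hq : IsUnit q) (hqc : ∀ r : R, q * r = r * q)
    (h : v * u = q * (u * v)) :
    ∀ n : ℕ, (u + v) ^ n =
      ∑ k ∈ Finset.range (n + 1), gaussBinom q n k * u ^ (n - k) * v ^ k := by
  intro n
  induction n with
  | zero => simp [gaussBinom]
  | succ n ih =>
    have hpowc : ∀ (m : ℕ) (r : R), q ^ m * r = r * q ^ m := fun m r =>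
      (show Commute q r from hqc r).pow_left m
    rw [pow_succ, ih, Finset.sum_mul]
    -- rewrite each term of the LHS
    have lhs_eq : ∀ k ∈ Finset.range (n + 1),
        gaussBinom q n k * u ^ (n - k) * v ^ k * (u + v) =
          q ^ k * gaussBinom q n k * u ^ (n + 1 - k) * v ^ k
            + gaussBinom q n k * u ^ (n - k) * v ^ (k + 1) := by
      intro k hk
      have hkn : k ≤ n := by simpa [Nat.lt_succ_iff] using hk
      rw [mul_add]
      congr 1
      · have hnk : n + 1 - k = (n - k) + 1 := by omega
        rw [hnk, mul_assoc, vu_pow q u v hqc h k, pow_succ]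
        simp only [← mul_assoc]
        rw [mul_assoc (gaussBinom q n k), ← hpowc k (u ^ (n - k))]
        simp only [← mul_assoc]
        rw [gaussBinom_comm q hqc n k (q ^ k)]
      · rw [mul_assoc, ← pow_succ]
    rw [Finset.sum_congr rfl lhs_eq, Finset.sum_add_distrib]
    -- rewrite RHS
    rw [Finset.sum_range_succ' (fun k => gaussBinom q (n + 1) k * u ^ (n + 1 - k) * v ^ k)]
    have rhs_eq : ∀ k ∈ Finset.range (n + 1),
        gaussBinom q (n + 1) (k + 1) * u ^ (n + 1 - (k + 1)) * v ^ (k + 1) =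
          q ^ (k + 1) * gaussBinom q n (k + 1) * u ^ (n - k) * v ^ (k + 1)
            + gaussBinom q n k * u ^ (n - k) * v ^ (k + 1) := by
      intro k hk
      rw [gaussBinom, Nat.succ_sub_succ, add_mul, add_mul, mul_assoc (q ^ (k + 1)), add_comm]
    rw [Finset.sum_congr rfl rhs_eq, Finset.sum_add_distrib]
    -- peel off the k = 0 term from the first LHS sum
    rw [Finset.sum_range_succ' (fun k => q ^ k * gaussBinom q n k * u ^ (n + 1 - k) * v ^ k)]
    -- drop the vanishing top term from the RHS first sum
    rw [Finset.sum_range_succ (fun k => q ^ (k + 1) * gaussBinom q n (k + 1) * u ^ (n - k) * v ^ (k + 1)),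
      gaussBinom_eq_zero q n (n + 1) (by omega)]
    simp only [pow_zero, gaussBinom_zero_right, mul_zero, zero_mul, add_zero, one_mul,
      Nat.sub_zero, mul_one, Nat.succ_sub_succ]
    abel
end

section
/- Let R be a ring and x, y, z elements such that x*y = y*x and y*z - z*y = z (so z*y = (y-1)*z), and suppose z*x = β*x*z for a central unit β. Then for all natural numbers n, m, t, s: (x^n * y^m * z^t)^s = β^(n*t*(s choose 2)) * x^(n*s) * (product over j from 0 to s-1 of (y - j*t)^m) * z^(t*s). -/
theorem block_power_type2vi {R : Type*} [Ring R] (x y z β : R)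
    (hβ : IsUnit β) (hβc : ∀ r : R, β * r = r * β)
    (hxy : x * y = y * x) (hzx : z * x = β * (x * z))
    (hzy : z * y = (y - 1) * z) :
    ∀ n m t s : ℕ,
      (x ^ n * y ^ m * z ^ t) ^ s =
        β ^ (n * t * s.choose 2) * x ^ (n * s) *
          ((List.range s).map (fun j => (y - ((j * t : ℕ) : R)) ^ m)).prod *
          z ^ (t * s) := by
  have hβcomm : ∀ r : R, Commute β r := fun r => hβc r
  have hβpow : ∀ (k : ℕ) (r : R), Commute (β ^ k) r := fun k r => (hβcomm r).pow_left k
  have hzxn : ∀ n : ℕ, z * x ^ n = β ^ n * (x ^ n * z) := by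
    intro n
    induction n with
    | zero => simp
    | succ n ih =>
      rw [pow_succ, ← mul_assoc, ih, mul_assoc, mul_assoc, hzx, ← mul_assoc (x ^ n) β,
        ← (hβcomm (x ^ n)).eq, pow_succ]
      simp only [mul_assoc]
  have hztxn : ∀ t n : ℕ, z ^ t * x ^ n = β ^ (n * t) * (x ^ n * z ^ t) := by
    intro t n
    induction t with
    | zero => simp
    | succ t ih =>
      rw [pow_succ, mul_assoc, hzxn, ← mul_assoc, ← (hβpow n (z ^ t)).eq, mul_assoc,
        ← mul_assoc (z ^ t), ih, Nat.mul_succ, pow_add]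
      simp only [pow_succ, mul_assoc (G := R)]
      rw [← mul_assoc (β ^ n), ← mul_assoc (β ^ (n * t)), ← pow_add, ← pow_add, Nat.add_comm]
  have hzyc : ∀ c : ℕ, z * (y - (c : R)) = (y - ((c + 1 : ℕ) : R)) * z := by
    intro c
    have h : ((c : R)) * z = z * (c : R) := (Nat.cast_commute c z).eq
    rw [mul_sub, hzy, ← h, sub_mul, Nat.cast_add, Nat.cast_one]
    noncomm_ring
  have hzycm : ∀ c m : ℕ, z * (y - (c : R)) ^ m = (y - ((c + 1 : ℕ) : R)) ^ m * z := by
    intro c m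
    induction m with
    | zero => simp
    | succ m ih =>
      rw [pow_succ, ← mul_assoc, ih, pow_succ, mul_assoc, hzyc c, ← mul_assoc]
  have hztycm : ∀ t c m : ℕ, z ^ t * (y - (c : R)) ^ m = (y - ((c + t : ℕ) : R)) ^ m * z ^ t := by
    intro t
    induction t with
    | zero => simp
    | succ t ih =>
      intro c m
      rw [pow_succ, mul_assoc, hzycm, ← mul_assoc, ih, mul_assoc, ← pow_succ]
      have h' : c + 1 + t = c + (t + 1) := by omega
      rw [h']
  have hxyc : ∀ c : ℕ, Commute x (y - (c : R)) :=
    fun c => Commute.sub_right hxy (Nat.cast_commute c x).symm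
  have hxycm : ∀ (n c m : ℕ), Commute (x ^ n) ((y - (c : R)) ^ m) := fun n c m =>
    (hxyc c).pow_pow n m
  intro n m t s
  induction s with
  | zero => simp
  | succ s ih =>
    rw [pow_succ, ih]
    have hprod : ((List.range (s + 1)).map (fun j => (y - ((j * t : ℕ) : R)) ^ m)).prod =
        ((List.range s).map (fun j => (y - ((j * t : ℕ) : R)) ^ m)).prod *
          (y - ((s * t : ℕ) : R)) ^ m := by
      rw [List.range_succ, List.map_append, List.prod_append]
      simp
    rw [hprod]
    set P := ((List.range s).map (fun j => (y - ((j * t : ℕ) : R)) ^ m)).prod with hP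
    have hxP : ∀ k : ℕ, Commute (x ^ k) P := by
      intro k
      apply Commute.list_prod_right
      intro a ha
      simp only [List.mem_map] at ha
      obtain ⟨j, _, rfl⟩ := ha
      exact hxycm k (j * t) m
    have hy0 : (y : R) ^ m = (y - ((0 : ℕ) : R)) ^ m := by norm_num
    simp only [mul_assoc (G := R)]
    -- step 1: z^(t*s) * x^n
    rw [← mul_assoc (z ^ (t * s)) (x ^ n), hztxn]
    simp only [mul_assoc (G := R)]
    -- step 2: move β^(n*(t*s)) to the front
    rw [← mul_assoc P (β ^ (n * (t * s))), ← (hβpow (n * (t * s)) P).eq]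
    simp only [mul_assoc (G := R)]
    rw [← mul_assoc (x ^ (n * s)) (β ^ (n * (t * s))), ← (hβpow (n * (t * s)) (x ^ (n * s))).eq]
    simp only [mul_assoc (G := R)]
    rw [← mul_assoc (β ^ (n * t * s.choose 2)), ← pow_add]
    -- step 3: z^(t*s) * y^m
    rw [hy0, ← mul_assoc (z ^ (t * s)) ((y - ((0:ℕ):R)) ^ m), hztycm]
    simp only [Nat.zero_add, mul_assoc (G := R)]
    -- step 4: move x^n left through P
    rw [← mul_assoc P (x ^ n), ← (hxP n).eq]
    simp only [mul_assoc (G := R)]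
    rw [← mul_assoc (x ^ (n * s)) (x ^ n), ← pow_add]
    -- step 5: combine z powers
    rw [← pow_add]
    -- step 6: arithmetic on exponents
    have e1 : n * t * s.choose 2 + n * (t * s) = n * t * (s + 1).choose 2 := by
      have : (s + 1).choose 2 = s.choose 2 + s := by
        rw [Nat.choose_succ_succ]
        simp [Nat.add_comm]
      rw [this]; ring
    have e2 : n * s + n = n * (s + 1) := by ring
    have e3 : t * s + t = t * (s + 1) := by ring
    have e4 : (t * s : ℕ) = (s * t : ℕ) := by ring
    rw [e1, e2, e3, e4]
end

section
/- Let R be a ring, a a central element, and y, z elements satisfying y*z - z*y = a*z, equivalently z*y = (y - a)*z. Then for all natural numbers n, m and s: (y^n * z^m)^s = (product over j from 0 to s-1 of (y - a*j*m)^n) * z^(m*s). -/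
theorem yn_zm_power_ashift {R : Type*} [Ring R] (y z a : R)
    (hac : ∀ r : R, a * r = r * a)
    (h : y * z - z * y = a * z) :
    ∀ n m s : ℕ,
      (y ^ n * z ^ m) ^ s =
        ((List.range s).map (fun j => (y - a * ((j * m : ℕ) : R)) ^ n)).prod *
          z ^ (m * s) := by
  have hzy : z * y = (y - a) * z := by
    rw [sub_mul, ← h]; abel
  have L1 : ∀ k : ℕ, z * (y - a * (k : R)) = (y - a * ((k + 1 : ℕ) : R)) * z := by
    intro k
    have hk : z * (a * (k : R)) = (a * (k : R)) * z := by
      rw [← mul_assoc, ← hac z, mul_assoc, ← (Nat.cast_commute k z).eq, ← mul_assoc]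
    push_cast
    rw [mul_sub, hzy, hk]
    noncomm_ring
  have L2 : ∀ n k : ℕ, z * (y - a * (k : R)) ^ n =
      (y - a * ((k + 1 : ℕ) : R)) ^ n * z := by
    intro n k
    induction n with
    | zero => simp
    | succ n ih =>
      rw [pow_succ', ← mul_assoc, L1 k, mul_assoc, ih, ← mul_assoc, ← pow_succ']
  have L3 : ∀ m n k : ℕ, z ^ m * (y - a * (k : R)) ^ n =
      (y - a * ((k + m : ℕ) : R)) ^ n * z ^ m := by
    intro m
    induction m with
    | zero => simp
    | succ m ih =>
      intro n k
      rw [pow_succ', mul_assoc, ih n k, ← mul_assoc, L2 n (k + m), mul_assoc,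
        ← pow_succ']
      norm_num
      rw [add_assoc]
  intro n m s
  induction s with
  | zero => simp
  | succ s ih =>
    rw [pow_succ, ih, List.range_succ, List.map_append, List.prod_append]
    have h0 : z ^ (m * s) * y ^ n = (y - a * ((m * s : ℕ) : R)) ^ n * z ^ (m * s) := by
      have := L3 (m * s) n 0
      simpa using this
    simp only [List.map_cons, List.map_nil, List.prod_cons, List.prod_nil, mul_one]
    rw [mul_assoc, ← mul_assoc (z ^ (m * s)), h0, mul_assoc, ← pow_add,
      show m * s + m = m * (s + 1) from (Nat.mul_succ m s).symm,
      Nat.mul_comm m s, ← mul_assoc]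
end

section
/- Let R be a ring and x, y, z elements such that z is central and x*y - y*x = z. Then for all natural numbers n, m: y^n * x^m = sum over k from 0 to min(m,n) of (-1)^k * (n choose k) * m*(m-1)*...*(m-k+1) * x^(m-k) * y^(n-k) * z^k. -/
section HeisenbergAux

variable {R : Type*} [Ring R] (x y z : R)

theorem yn_xm_auxA (hzc : ∀ r : R, z * r = r * z) (h : x * y - y * x = z) :
    ∀ j : ℕ, y ^ j * x = x * y ^ j - (j : R) * (z * y ^ (j - 1)) := by
  have hy : y * x = x * y - z := by rw [← h]; abel
  intro j
  induction j with
  | zero => simp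
  | succ j ih =>
    have hstep : ((j : R)) * (z * y ^ (j-1)) * y = (j : R) * (z * y ^ j) := by
      cases j with
      | zero => simp
      | succ i => simp [mul_assoc, ← pow_succ]
    calc y ^ (j+1) * x = y ^ j * (y * x) := by rw [pow_succ, mul_assoc]
      _ = y ^ j * (x * y) - y ^ j * z := by rw [hy]; noncomm_ring
      _ = (y ^ j * x) * y - z * y ^ j := by rw [← hzc, mul_assoc]
      _ = (x * y ^ j - (j:R) * (z * y ^ (j-1))) * y - z * y ^ j := by rw [ih]
      _ = x * y ^ (j+1) - ((j:R) * (z * y ^ j) + z * y ^ j) := by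
          rw [sub_mul, mul_assoc, ← pow_succ, hstep]; abel
      _ = x * y ^ (j+1) - ((j+1 : ℕ) : R) * (z * y ^ ((j+1) - 1)) := by
          push_cast; ring_nf; rw [add_mul, one_mul]

theorem yn_xm_auxE (hzc : ∀ r : R, z * r = r * z) (h : x * y - y * x = z) (a b c : ℕ) :
    (x ^ a * y ^ b * z ^ c) * x
      = x ^ (a+1) * y ^ b * z ^ c - ((b : R)) * (x ^ a * y ^ (b-1) * z ^ (c+1)) := by
  have hb : ∀ r : R, (b : R) * r = r * (b : R) := fun r => (Nat.cast_commute b r).eq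
  have hzk : ∀ (r : R) (k : ℕ), z ^ k * r = r * z ^ k := fun r k =>
    (Commute.pow_left (show Commute z r from hzc r) k).eq
  calc (x ^ a * y ^ b * z ^ c) * x
      = x ^ a * (y ^ b * x) * z ^ c := by
        rw [mul_assoc (x ^ a * y ^ b), hzk x c, ← mul_assoc, mul_assoc (x ^ a)]
    _ = x ^ a * (x * y ^ b) * z ^ c - x ^ a * ((b : R) * (z * y ^ (b - 1))) * z ^ c := by
        rw [yn_xm_auxA x y z hzc h b, mul_sub, sub_mul]
    _ = x ^ (a+1) * y ^ b * z ^ c - (b : R) * (x ^ a * y ^ (b - 1) * z ^ (c + 1)) := by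
        congr 1
        · rw [← mul_assoc, ← pow_succ]
        · rw [← mul_assoc (x ^ a) ((b : R)), ← hb (x ^ a)]
          simp only [mul_assoc]
          congr 2
          rw [hzc (y ^ (b - 1) * z ^ c), mul_assoc, ← pow_succ]

theorem yn_xm_shift (G : ℕ → R) (N : ℕ) :
    ∑ k ∈ Finset.range N, G k
      = ∑ k ∈ Finset.range (N+1), (if k = 0 then 0 else G (k-1)) := by
  rw [Finset.sum_range_succ']
  simp

theorem yn_xm_natid (n m j : ℕ) (hj : j ≤ m) :
    n.choose (j+1) * m.descFactorial (j+1) + (n-j) * (n.choose j * m.descFactorial j)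
      = n.choose (j+1) * (m+1).descFactorial (j+1) := by
  have e3 : n.choose j * (n - j) = n.choose (j+1) * (j+1) :=
    (Nat.choose_succ_right_eq n j).symm
  have e4 : (m - j) + (j+1) = m+1 := by omega
  rw [Nat.descFactorial_succ, Nat.succ_descFactorial_succ]
  calc n.choose (j+1) * ((m-j) * m.descFactorial j) + (n-j) * (n.choose j * m.descFactorial j)
      = (n.choose (j+1) * (m-j) + n.choose j * (n-j)) * m.descFactorial j := by ring
    _ = (n.choose (j+1) * (m-j) + n.choose (j+1) * (j+1)) * m.descFactorial j := by rw [e3]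
    _ = n.choose (j+1) * ((m-j) + (j+1)) * m.descFactorial j := by ring
    _ = n.choose (j+1) * ((m+1) * m.descFactorial j) := by rw [e4]; ring

theorem yn_xm_key (hzc : ∀ r : R, z * r = r * z) (h : x * y - y * x = z) (n : ℕ) :
    ∀ m : ℕ, y ^ n * x ^ m = ∑ k ∈ Finset.range (m+1),
      (((-1)^k * n.choose k * m.descFactorial k : ℤ) : R) * (x ^ (m-k) * y ^ (n-k) * z ^ k) := by
  intro m
  induction m with
  | zero => simp
  | succ m ih =>
    have key1 : ∀ k ∈ Finset.range (m+1),
        ((((-1)^k * n.choose k * m.descFactorial k : ℤ) : R) * (x ^ (m-k) * y ^ (n-k) * z ^ k)) * x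
        = (((-1)^k * n.choose k * m.descFactorial k : ℤ) : R) * (x ^ (m+1-k) * y ^ (n-k) * z ^ k)
          - ((((n-k : ℕ) : ℤ) * ((-1)^k * n.choose k * m.descFactorial k) : ℤ) : R) *
              (x ^ (m-k) * y ^ (n-(k+1)) * z ^ (k+1)) := by
      intro k hk
      have hk' : k ≤ m := by simpa [Nat.lt_succ_iff] using Finset.mem_range.mp hk
      have hms : m - k + 1 = m + 1 - k := by omega
      rw [mul_assoc _ _ x, yn_xm_auxE x y z hzc h (m-k) (n-k) k, hms, mul_sub]
      congr 1
      rw [← mul_assoc, (Int.cast_commute ((-1)^k * n.choose k * m.descFactorial k : ℤ)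
        (((n-k : ℕ) : R))).eq, Nat.sub_sub]
      push_cast
      simp only [mul_assoc]
    calc y ^ n * x ^ (m+1)
        = (y ^ n * x ^ m) * x := by rw [pow_succ, ← mul_assoc]
      _ = ∑ k ∈ Finset.range (m+1),
            ((((-1)^k * n.choose k * m.descFactorial k : ℤ) : R)
              * (x ^ (m-k) * y ^ (n-k) * z ^ k)) * x := by rw [ih, Finset.sum_mul]
      _ = ∑ k ∈ Finset.range (m+1),
            ((((-1)^k * n.choose k * m.descFactorial k : ℤ) : R) * (x ^ (m+1-k) * y ^ (n-k) * z ^ k)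
              - ((((n-k : ℕ) : ℤ) * ((-1)^k * n.choose k * m.descFactorial k) : ℤ) : R) *
                  (x ^ (m-k) * y ^ (n-(k+1)) * z ^ (k+1))) := Finset.sum_congr rfl key1
      _ = (∑ k ∈ Finset.range (m+1),
            (((-1)^k * n.choose k * m.descFactorial k : ℤ) : R) * (x ^ (m+1-k) * y ^ (n-k) * z ^ k))
          - ∑ k ∈ Finset.range (m+1),
              ((((n-k : ℕ) : ℤ) * ((-1)^k * n.choose k * m.descFactorial k) : ℤ) : R) *
                  (x ^ (m-k) * y ^ (n-(k+1)) * z ^ (k+1)) := Finset.sum_sub_distrib _ _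
      _ = (∑ k ∈ Finset.range (m+2),
            (((-1)^k * n.choose k * m.descFactorial k : ℤ) : R) * (x ^ (m+1-k) * y ^ (n-k) * z ^ k))
          - ∑ k ∈ Finset.range (m+2),
              (if k = 0 then 0 else
                ((((n-(k-1) : ℕ) : ℤ) * ((-1)^(k-1) * n.choose (k-1) * m.descFactorial (k-1)) : ℤ) : R) *
                  (x ^ (m-(k-1)) * y ^ (n-k) * z ^ k)) := by
          congr 1
          · symm
            rw [Finset.sum_range_succ]
            have h0 : m.descFactorial (m+1) = 0 :=
              Nat.descFactorial_eq_zero_iff_lt.mpr (Nat.lt_succ_self m)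
            simp [h0]
          · rw [yn_xm_shift]
            refine Finset.sum_congr rfl fun k _ => ?_
            match k with
            | 0 => simp
            | (j+1) => simp only [Nat.succ_ne_zero, if_false, Nat.add_sub_cancel]
      _ = ∑ k ∈ Finset.range (m+2),
            (((-1)^k * n.choose k * (m+1).descFactorial k : ℤ) : R)
              * (x ^ (m+1-k) * y ^ (n-k) * z ^ k) := by
          rw [← Finset.sum_sub_distrib]
          refine Finset.sum_congr rfl ?_
          intro k hk
          match k with
          | 0 => simp
          | (j+1) =>
            have hj : j ≤ m := by
              have := Finset.mem_range.mp hk; omega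
            simp only [if_neg (Nat.succ_ne_zero j), Nat.add_sub_cancel]
            have hxp : m + 1 - (j+1) = m - j := by omega
            have hnat := yn_xm_natid n m j hj
            have hint : ((n.choose (j+1) * m.descFactorial (j+1)
                + (n-j) * (n.choose j * m.descFactorial j) : ℕ) : ℤ)
                = ((n.choose (j+1) * (m+1).descFactorial (j+1) : ℕ) : ℤ) := by
              exact_mod_cast congrArg (Nat.cast : ℕ → ℤ) hnat
            push_cast at hint
            have hint2 : ((-1:ℤ)^(j+1) * n.choose (j+1) * m.descFactorial (j+1))
                - (((n-j : ℕ) : ℤ) * ((-1)^j * n.choose j * m.descFactorial j))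
                = (-1)^(j+1) * n.choose (j+1) * (m+1).descFactorial (j+1) := by
              linear_combination ((-1 : ℤ)^(j+1)) * hint
            rw [hxp, ← sub_mul, ← Int.cast_sub, hint2]

end HeisenbergAux

theorem yn_xm_heisenberg {R : Type*} [Ring R] (x y z : R)
    (hzc : ∀ r : R, z * r = r * z)
    (h : x * y - y * x = z) :
    ∀ n m : ℕ,
      y ^ n * x ^ m =
        ∑ k ∈ Finset.range (min m n + 1),
          (-1 : R) ^ k * (n.choose k : R) * (m.descFactorial k : R) *
            x ^ (m - k) * y ^ (n - k) * z ^ k := by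
  intro n m
  rw [yn_xm_key x y z hzc h n m]
  have hsub : Finset.range (min m n + 1) ⊆ Finset.range (m+1) := by
    apply Finset.range_subset_range.mpr; omega
  have hvan : ∀ k ∈ Finset.range (m+1), k ∉ Finset.range (min m n + 1) →
      (-1 : R) ^ k * (n.choose k : R) * (m.descFactorial k : R) *
        x ^ (m - k) * y ^ (n - k) * z ^ k = 0 := by
    intro k hk hk'
    have hkn : n < k := by
      simp only [Finset.mem_range] at hk hk'
      omega
    rw [Nat.choose_eq_zero_of_lt hkn]
    simp
  calc (∑ k ∈ Finset.range (m+1),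
        (((-1)^k * n.choose k * m.descFactorial k : ℤ) : R) * (x ^ (m-k) * y ^ (n-k) * z ^ k))
      = ∑ k ∈ Finset.range (m+1),
        (-1 : R) ^ k * (n.choose k : R) * (m.descFactorial k : R) *
          x ^ (m - k) * y ^ (n - k) * z ^ k := by
        refine Finset.sum_congr rfl fun k _ => ?_
        push_cast
        simp only [mul_assoc]
    _ = ∑ k ∈ Finset.range (min m n + 1),
        (-1 : R) ^ k * (n.choose k : R) * (m.descFactorial k : R) *
          x ^ (m - k) * y ^ (n - k) * z ^ k := (Finset.sum_subset hsub hvan).symm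
end

section
/- Let R be a ring and x, y, z elements such that z is central and x*y - y*x = z. Then for all natural numbers s: (x*y)^s = sum over ℓ from 0 to s of (-1)^ℓ * S(s, s-ℓ) * x^(s-ℓ) * y^(s-ℓ) * z^ℓ, where S(s, r) denotes the Stirling numbers of the second kind. -/
/-- Stirling numbers of the second kind, via the recurrence
`S(n+1, k+1) = (k+1) * S(n, k+1) + S(n, k)`. -/
def stirling2 : ℕ → ℕ → ℕ
  | 0, 0 => 1
  | 0, _ + 1 => 0
  | _ + 1, 0 => 0
  | n + 1, k + 1 => (k + 1) * stirling2 n (k + 1) + stirling2 n k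

lemma stirling2_eq_zero : ∀ n k : ℕ, n < k → stirling2 n k = 0
  | 0, _ + 1, _ => rfl
  | n + 1, k + 1, h => by
    rw [stirling2, stirling2_eq_zero n (k + 1) (by omega),
      stirling2_eq_zero n k (by omega)]
    ring

theorem xy_power_heisenberg {R : Type*} [Ring R] (x y z : R)
    (hzc : ∀ r : R, z * r = r * z)
    (h : x * y - y * x = z) :
    ∀ s : ℕ,
      (x * y) ^ s =
        ∑ ℓ ∈ Finset.range (s + 1),
          (-1 : R) ^ ℓ * (stirling2 s (s - ℓ) : R) *
            x ^ (s - ℓ) * y ^ (s - ℓ) * z ^ ℓ := by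
  have hz : ∀ a : R, Commute z a := hzc
  have hswap : ∀ (a : R) (n : ℕ), z ^ n * a = a * z ^ n := fun a n =>
    ((hz a).pow_left n).eq
  have hyx : y * x = x * y - z := by rw [← h]; abel
  have L : ∀ b : ℕ, y ^ (b + 1) * x = x * y ^ (b + 1) - ((b + 1 : ℕ) : ℤ) • (z * y ^ b) := by
    intro b
    induction b with
    | zero => simpa using hyx
    | succ b ih =>
      have h2 : y * (z * y ^ b) = z * y ^ (b + 1) := by
        rw [← mul_assoc, ← hzc y, mul_assoc, ← pow_succ']
      calc y ^ (b + 2) * x = y * (y ^ (b + 1) * x) := by rw [pow_succ', mul_assoc]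
        _ = y * (x * y ^ (b + 1)) - ((b + 1 : ℕ) : ℤ) • (y * (z * y ^ b)) := by
            rw [ih, mul_sub, mul_smul_comm]
        _ = x * y ^ (b + 1 + 1) - ((b + 1 + 1 : ℕ) : ℤ) • (z * y ^ (b + 1)) := by
            rw [h2, ← mul_assoc, hyx, sub_mul, mul_assoc, ← pow_succ']
            rw [show ((b + 1 + 1 : ℕ) : ℤ) = 1 + ((b + 1 : ℕ) : ℤ) by push_cast; ring,
              add_smul, one_smul]
            module
  have KT : ∀ a ℓ : ℕ, (x ^ a * (y ^ a * z ^ ℓ)) * (x * y)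
      = x ^ (a + 1) * (y ^ (a + 1) * z ^ ℓ) - ((a : ℕ) : ℤ) • (x ^ a * (y ^ a * z ^ (ℓ + 1))) := by
    intro a ℓ
    match a with
    | 0 =>
      simp only [pow_zero, one_mul, Nat.cast_zero, Int.cast_zero, zero_smul, sub_zero,
        zero_add, pow_one]
      rw [hswap, mul_assoc]
    | b + 1 =>
      have e1 : (x ^ (b+1) * (y ^ (b+1) * z ^ ℓ)) * (x * y)
          = x ^ (b+1) * ((y ^ (b+1) * x) * (y * z ^ ℓ)) := by
        simp only [mul_assoc]
        rw [hswap, mul_assoc]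
      rw [e1, L b, sub_mul, mul_sub, smul_mul_assoc, mul_smul_comm]
      have p1 : x ^ (b+1) * ((x * y ^ (b+1)) * (y * z ^ ℓ))
          = x ^ (b + 1 + 1) * (y ^ (b + 1 + 1) * z ^ ℓ) := by
        simp only [pow_succ, mul_assoc]
      have p2 : x ^ (b+1) * ((z * y ^ b) * (y * z ^ ℓ))
          = x ^ (b+1) * (y ^ (b+1) * z ^ (ℓ + 1)) := by
        congr 1
        rw [mul_assoc, ← mul_assoc (y ^ b), ← pow_succ, ← mul_assoc, hzc,
          mul_assoc, ← pow_succ']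
      rw [p1, p2]
  have aux : ∀ s : ℕ, (x * y) ^ s =
      ∑ ℓ ∈ Finset.range (s + 1),
        ((-1 : ℤ) ^ ℓ * ((stirling2 s (s - ℓ) : ℕ) : ℤ)) •
          (x ^ (s - ℓ) * (y ^ (s - ℓ) * z ^ ℓ)) := by
    intro s
    induction s with
    | zero => simp [stirling2]
    | succ s ih =>
      set f : ℕ → R := fun ℓ =>
        ((-1 : ℤ) ^ ℓ * (((s + 1 - ℓ) * stirling2 s (s + 1 - ℓ) : ℕ) : ℤ)) •
          (x ^ (s + 1 - ℓ) * (y ^ (s + 1 - ℓ) * z ^ ℓ)) with hf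
      have hf0 : f 0 = 0 := by
        simp [hf, stirling2_eq_zero s (s + 1) (by omega)]
      have hfs : f (s + 1) = 0 := by simp [hf]
      rw [pow_succ, ih, Finset.sum_mul]
      have hstep : ∀ ℓ ∈ Finset.range (s + 1),
          (((-1 : ℤ) ^ ℓ * ((stirling2 s (s - ℓ) : ℕ) : ℤ)) •
              (x ^ (s - ℓ) * (y ^ (s - ℓ) * z ^ ℓ))) * (x * y)
          = ((-1 : ℤ) ^ ℓ * ((stirling2 s (s - ℓ) : ℕ) : ℤ)) •
              (x ^ (s + 1 - ℓ) * (y ^ (s + 1 - ℓ) * z ^ ℓ)) + f (ℓ + 1) := by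
        intro ℓ hℓ
        simp only [Finset.mem_range] at hℓ
        have hr : s - ℓ + 1 = s + 1 - ℓ := by omega
        have hr2 : s + 1 - (ℓ + 1) = s - ℓ := by omega
        rw [smul_mul_assoc, KT (s - ℓ) ℓ, hr, smul_sub, smul_smul, hf]
        simp only [hr2]
        rw [sub_eq_add_neg, ← neg_smul]
        congr 2
        push_cast
        ring
      rw [Finset.sum_congr rfl hstep, Finset.sum_add_distrib]
      have e2 : ∑ ℓ ∈ Finset.range (s + 1), f (ℓ + 1) = ∑ ℓ ∈ Finset.range (s + 1), f ℓ := by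
        calc ∑ ℓ ∈ Finset.range (s + 1), f (ℓ + 1)
            = (∑ ℓ ∈ Finset.range (s + 1), f (ℓ + 1)) + f 0 := by rw [hf0, add_zero]
          _ = ∑ ℓ ∈ Finset.range (s + 2), f ℓ := (Finset.sum_range_succ' f (s + 1)).symm
          _ = (∑ ℓ ∈ Finset.range (s + 1), f ℓ) + f (s + 1) := Finset.sum_range_succ f (s + 1)
          _ = ∑ ℓ ∈ Finset.range (s + 1), f ℓ := by rw [hfs, add_zero]
      rw [e2, ← Finset.sum_add_distrib]
      conv_rhs => rw [Finset.sum_range_succ]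
      have hlast : ((-1 : ℤ) ^ (s + 1) * ((stirling2 (s + 1) (s + 1 - (s + 1)) : ℕ) : ℤ)) •
          (x ^ (s + 1 - (s + 1)) * (y ^ (s + 1 - (s + 1)) * z ^ (s + 1))) = 0 := by
        simp [stirling2]
      rw [hlast, add_zero]
      refine Finset.sum_congr rfl fun ℓ hℓ => ?_
      simp only [Finset.mem_range] at hℓ
      have hr : s + 1 - ℓ = (s - ℓ) + 1 := by omega
      have hrec : (stirling2 (s + 1) (s + 1 - ℓ) : ℕ)
          = (s + 1 - ℓ) * stirling2 s (s + 1 - ℓ) + stirling2 s (s - ℓ) := by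
        rw [hr, stirling2, ← hr]
      rw [hrec, hf]
      push_cast [Nat.cast_add, Nat.cast_mul]
      rw [mul_add, add_smul, add_comm]
  intro s
  rw [aux s]
  refine Finset.sum_congr rfl fun ℓ _ => ?_
  simp only [zsmul_eq_mul, Int.cast_mul, Int.cast_pow, Int.cast_neg, Int.cast_one,
    Int.cast_natCast, mul_assoc]
end

section
/- Let R be a ring, b a central element, and x, y elements satisfying x*y - y*x = b. Then for all natural numbers n, m: y^n * x^m = sum over k from 0 to min(m,n) of (-1)^k * (n choose k) * b^k * m*(m-1)*...*(m-k+1) * x^(m-k) * y^(n-k). -/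
section
variable {R : Type*} [Ring R]

theorem aux1' (x y b : R) (hbc : ∀ r : R, b * r = r * b)
    (h : x * y - y * x = b) :
    ∀ m : ℕ, y * x ^ m = x ^ m * y - (m : R) * b * x ^ (m - 1) := by
  have hyx : y * x = x * y - b := by rw [← h, sub_sub_cancel]
  intro m
  induction m with
  | zero => simp
  | succ m ih =>
    rw [pow_succ, ← mul_assoc, ih]
    cases m with
    | zero => simp [hyx, hbc]
    | succ j =>
      have e1 : x ^ (j + 1) * b = b * x ^ (j + 1) := (hbc _).symm
      push_cast
      rw [sub_mul, mul_assoc (x ^ (j+1)), hyx, mul_sub, e1]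
      noncomm_ring

theorem step' (x y b : R) (hbc : ∀ r : R, b * r = r * b)
    (h : x * y - y * x = b) (n m k : ℕ) (hk : k ≤ n) :
    y * ((-1:R)^k * (n.choose k : R) * b^k * (m.descFactorial k : R) * x^(m-k) * y^(n-k))
    = (-1:R)^k * (n.choose k : R) * b^k * (m.descFactorial k : R) * x^(m-k) * y^(n+1-k)
      + (-1:R)^(k+1) * (n.choose k : R) * b^(k+1) * (m.descFactorial (k+1) : R) *
        x^(m-(k+1)) * y^((n+1)-(k+1)) := by
  have hb : ∀ r : R, Commute b r := fun r => hbc r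
  have hA : Commute ((-1:R)^k * (n.choose k : R) * b^k * (m.descFactorial k : R)) y :=
    ((((Commute.one_left y).neg_left.pow_left k).mul_left (Nat.cast_commute _ y)).mul_left
      ((hb y).pow_left k)).mul_left (Nat.cast_commute _ y)
  have he1 : n - k + 1 = n + 1 - k := by omega
  have he2 : n + 1 - (k + 1) = n - k := by omega
  have he3 : m - k - 1 = m - (k + 1) := by omega
  have hDU : Commute ((m.descFactorial k : ℕ) : R) ((m - k : ℕ) : R) := Nat.cast_commute _ _
  have hDb : Commute ((m.descFactorial k : ℕ) : R) b := (hb _).symm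
  have hUb : Commute ((m - k : ℕ) : R) b := (hb _).symm
  have key2 : (-1:R)^k * (n.choose k : R) * b^k * (m.descFactorial k : R) *
      (((m - k : ℕ) : R) * b * x^(m-(k+1))) * y^(n-k)
      = -((-1:R)^(k+1) * (n.choose k : R) * b^(k+1) * (m.descFactorial (k+1) : R) *
        x^(m-(k+1)) * y^(n-k)) := by
    rw [Nat.descFactorial_succ, Nat.cast_mul]
    simp only [mul_assoc, neg_mul, mul_neg, neg_neg, one_mul, mul_one, pow_succ]
    rw [hDU.left_comm, hDb.left_comm, hUb.left_comm]
  rw [← mul_assoc, ← mul_assoc, ← hA.eq, mul_assoc _ y (x ^ (m - k)),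
    aux1' x y b hbc h (m - k), mul_sub, sub_mul, he2, he3, key2, sub_neg_eq_add]
  rw [← mul_assoc, mul_assoc _ y (y ^ (n - k)), ← pow_succ' y (n - k), he1]

theorem sumshift' (f g T : ℕ → R) (n : ℕ) (hT0 : T 0 = f 0)
    (hTs : ∀ i < n + 1, T (i + 1) = f (i + 1) + g i) (hfn : f (n + 1) = 0) :
    ∑ k ∈ Finset.range (n + 2), T k =
      ∑ k ∈ Finset.range (n + 1), f k + ∑ k ∈ Finset.range (n + 1), g k := by
  rw [Finset.sum_range_succ' T,
    Finset.sum_congr rfl (fun i hi => hTs i (Finset.mem_range.mp hi)),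
    Finset.sum_add_distrib, hT0, add_right_comm, ← Finset.sum_range_succ' f,
    Finset.sum_range_succ f, hfn, add_zero]

theorem aux2' (x y b : R) (hbc : ∀ r : R, b * r = r * b)
    (h : x * y - y * x = b) :
    ∀ n m : ℕ,
      y ^ n * x ^ m =
        ∑ k ∈ Finset.range (n + 1),
          (-1 : R) ^ k * (n.choose k : R) * b ^ k * (m.descFactorial k : R) *
            x ^ (m - k) * y ^ (n - k) := by
  intro n m
  induction n with
  | zero => simp
  | succ n ih =>
    rw [pow_succ', mul_assoc, ih, Finset.mul_sum]
    rw [Finset.sum_congr rfl (fun k hk =>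
      step' x y b hbc h n m k (Nat.lt_succ_iff.mp (Finset.mem_range.mp hk)))]
    rw [Finset.sum_add_distrib]
    refine (sumshift'
      (fun k => (-1 : R) ^ k * (n.choose k : R) * b ^ k * (m.descFactorial k : R) *
        x ^ (m - k) * y ^ (n + 1 - k))
      (fun k => (-1:R)^(k+1) * (n.choose k : R) * b^(k+1) * (m.descFactorial (k+1) : R) *
        x^(m-(k+1)) * y^((n+1)-(k+1)))
      (fun k => (-1 : R) ^ k * ((n+1).choose k : R) * b ^ k * (m.descFactorial k : R) *
        x ^ (m - k) * y ^ (n + 1 - k)) n ?_ ?_ ?_).symm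
    · simp
    · intro i hi
      simp only [Nat.choose_succ_succ, Nat.cast_add]
      noncomm_ring
    · simp [Nat.choose_succ_self]

end

theorem yn_xm_weyl_const {R : Type*} [Ring R] (x y b : R)
    (hbc : ∀ r : R, b * r = r * b)
    (h : x * y - y * x = b) :
    ∀ n m : ℕ,
      y ^ n * x ^ m =
        ∑ k ∈ Finset.range (min m n + 1),
          (-1 : R) ^ k * (n.choose k : R) * b ^ k * (m.descFactorial k : R) *
            x ^ (m - k) * y ^ (n - k) := by
  intro n m
  rw [aux2' x y b hbc h n m]
  refine (Finset.sum_subset (Finset.range_subset_range.mpr (by omega)) ?_).symm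
  intro i hi hni
  have hlt : m < i := by
    simp only [Finset.mem_range] at hi hni
    omega
  simp [Nat.descFactorial_eq_zero_iff_lt.mpr hlt]
end

section
/- Let R be a ring, a a central element, and x, y, z elements satisfying x*y = y*x, z*x = (x+1)*z, and z*y = (y-a)*z. Then for all natural numbers n, m, t, s: (x^n * y^m * z^t)^s = (product over r from 0 to s-1 of (x + r*t)^n * (y - r*t*a)^m) * z^(t*s). -/
theorem block_power_type5v {R : Type*} [Ring R] (x y z a : R)
    (hac : ∀ r : R, a * r = r * a)
    (hxy : x * y = y * x) (hzx : z * x = (x + 1) * z)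
    (hzy : z * y = (y - a) * z) :
    ∀ n m t s : ℕ,
      (x ^ n * y ^ m * z ^ t) ^ s =
        ((List.range s).map
            (fun r => (x + ((r * t : ℕ) : R)) ^ n *
              (y - ((r * t : ℕ) : R) * a) ^ m)).prod *
          z ^ (t * s) := by
  have hza : z * a = a * z := (hac z).symm
  have hA : ∀ t : ℕ, z ^ t * x = (x + (t : R)) * z ^ t := by
    intro t
    induction t with
    | zero => simp
    | succ t ih =>
      rw [pow_succ', mul_assoc, ih, ← mul_assoc, mul_add, hzx,
        ← (Nat.cast_commute t z).eq]
      push_cast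
      noncomm_ring
  have hB : ∀ t : ℕ, z ^ t * y = (y - (t : R) * a) * z ^ t := by
    intro t
    induction t with
    | zero => simp
    | succ t ih =>
      have hta : z * ((t : R) * a) = ((t : R) * a) * z := by
        rw [← mul_assoc, ← (Nat.cast_commute t z).eq, mul_assoc, hza, ← mul_assoc]
      rw [pow_succ', mul_assoc, ih, ← mul_assoc, mul_sub, hzy, hta]
      push_cast
      noncomm_ring
  have hAn : ∀ t n : ℕ, z ^ t * x ^ n = (x + (t : R)) ^ n * z ^ t := by
    intro t n
    induction n with
    | zero => simp
    | succ n ih =>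
      rw [pow_succ, ← mul_assoc, ih, mul_assoc, hA, ← mul_assoc, ← pow_succ]
  have hBn : ∀ t m : ℕ, z ^ t * y ^ m = (y - (t : R) * a) ^ m * z ^ t := by
    intro t m
    induction m with
    | zero => simp
    | succ m ih =>
      rw [pow_succ, ← mul_assoc, ih, mul_assoc, hB, ← mul_assoc, ← pow_succ]
  intro n m t s
  induction s with
  | zero => simp
  | succ s ih =>
    rw [pow_succ, ih, List.range_succ, List.map_append, List.prod_append]
    simp only [List.map_cons, List.map_nil, List.prod_cons, List.prod_nil, mul_one]
    have key : z ^ (t * s) * (x ^ n * y ^ m * z ^ t) =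
        (x + ((t * s : ℕ) : R)) ^ n * ((y - ((t * s : ℕ) : R) * a) ^ m *
          z ^ (t * (s + 1))) := by
      calc z ^ (t * s) * (x ^ n * y ^ m * z ^ t)
          = (z ^ (t * s) * x ^ n) * (y ^ m * z ^ t) := by
            rw [mul_assoc, mul_assoc]
        _ = (x + ((t * s : ℕ) : R)) ^ n * ((z ^ (t * s) * y ^ m) * z ^ t) := by
            rw [hAn]; rw [mul_assoc, mul_assoc, ← mul_assoc (z ^ (t*s))]
        _ = (x + ((t * s : ℕ) : R)) ^ n * ((y - ((t * s : ℕ) : R) * a) ^ m *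
              (z ^ (t * s) * z ^ t)) := by rw [hBn, mul_assoc]
        _ = _ := by rw [← pow_add]; ring_nf
    have hcast : ((s * t : ℕ) : R) = ((t * s : ℕ) : R) := by rw [Nat.mul_comm]
    rw [mul_assoc, key, hcast]
    rw [← mul_assoc, ← mul_assoc, ← mul_assoc]
end

section
/- Let R be a ring and x, y, z elements satisfying x*y = y*x, z*x = (x+1)*z, and z*y = (y-a)*z for a central element a. Then for every polynomial f in two commuting variables and every natural number r: z^r * f(x, y) = f(x + r, y - r*a) * z^r. -/
/-!
Conjugation by `z` shifts `x ↦ x + 1` and `y ↦ y - a`; since `z` commutes with the shifts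
`1` and `-a`, conjugation by `z ^ r` shifts by `r` and `-r a`. Semiconjugation by a fixed
element respects sums, products and powers, so it carries `f(x, y)` to `f` of the shifted
arguments.
-/

/-- Evaluation of an integer polynomial in two variables at a pair of
(commuting) elements `x`, `y` of a possibly noncommutative ring, placing all
powers of `x` to the left of powers of `y`. -/
noncomputable def evalXY {R : Type*} [Ring R] (x y : R)
    (f : MvPolynomial (Fin 2) ℤ) : R :=
  ∑ m ∈ f.support, ((MvPolynomial.coeff m f : ℤ) : R) * x ^ m 0 * y ^ m 1

theorem SemiconjBy.pow_left_of_add {M : Type*} [Semiring M] {z x c : M}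
    (h : SemiconjBy z x (x + c)) (hc : Commute z c) (n : ℕ) :
    SemiconjBy (z ^ n) x (x + n • c) := by
  induction n with
  | zero => simp
  | succ n ih =>
    have step : SemiconjBy z (x + n • c) (x + (n + 1) • c) := by
      simpa only [succ_nsmul', add_assoc] using h.add_right (hc.smul_right n)
    simpa only [pow_succ'] using step.mul_left ih

theorem SemiconjBy.evalXY {R : Type*} [Ring R] {z x y x' y' : R}
    (hx : SemiconjBy z x x') (hy : SemiconjBy z y y') (f : MvPolynomial (Fin 2) ℤ) :
    SemiconjBy z (evalXY x y f) (evalXY x' y' f) := by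
  unfold SemiconjBy _root_.evalXY
  rw [Finset.mul_sum, Finset.sum_mul]
  refine Finset.sum_congr rfl fun m _ => ?_
  have hcoeff : SemiconjBy z ((f.coeff m : ℤ) : R) ((f.coeff m : ℤ) : R) := Commute.intCast_right
  exact ((hcoeff.mul_right (hx.pow_right _)).mul_right (hy.pow_right _)).eq

theorem zr_poly_shift_general {R : Type*} [Ring R] (x y z a : R)
    (hac : ∀ r : R, a * r = r * a)
    (hzx : z * x = (x + 1) * z)
    (hzy : z * y = (y - a) * z) :
    ∀ (f : MvPolynomial (Fin 2) ℤ) (r : ℕ),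
      z ^ r * evalXY x y f = evalXY (x + (r : R)) (y - (r : R) * a) f * z ^ r := by
  intro f r
  have hX : SemiconjBy (z ^ r) x (x + r) := by
    simpa only [nsmul_one] using SemiconjBy.pow_left_of_add hzx (Commute.one_right z) r
  have hY : SemiconjBy (z ^ r) y (y - r * a) := by
    have hzy' : SemiconjBy z y (y + -a) := by rwa [← sub_eq_add_neg]
    simpa only [nsmul_eq_mul, mul_neg, ← sub_eq_add_neg]
      using SemiconjBy.pow_left_of_add hzy' (Commute.neg_right (hac z).symm) r
  exact (hX.evalXY hY f).eq

theorem zr_poly_shift {R : Type*} [Ring R] (x y z a : R)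
    (hac : ∀ r : R, a * r = r * a)
    (hxy : x * y = y * x) (hzx : z * x = (x + 1) * z)
    (hzy : z * y = (y - a) * z) :
    ∀ (f : MvPolynomial (Fin 2) ℤ) (r : ℕ),
      z ^ r * evalXY x y f = evalXY (x + (r : R)) (y - (r : R) * a) f * z ^ r :=
  zr_poly_shift_general x y z a hac hzx hzy
end
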